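/- Let f be a homogeneous quadratic function on GF(q) with rank r_f and sign ε_f, let α ∈ GF(q) with α ∉ Im(L_f), let β ∈ GF(q)*, and set S_4 = ∑_{z∈GF(p)} ∑_{x∈GF(q)} ζ_p^{f(x) − Tr((α − βz)x)}. If β ∈ ⋃_{z∈GF(p)*} (zα + Im(L_f)), say β ∈ (1/z_0)α + Im(L_f) for z_0 ∈ GF(p)*, and x' ∈ GF(q) satisfies L_f(x') = −(α − βz_0)/2, then S_4 = ε_f p^m (p*)^{−r_f/2} ζ_p^{−f(x')}. Otherwise S_4 = 0. -/

import Mathlib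

noncomputable section

open Finset

/-- `ζ_p = e^{2πi/p}`, a primitive `p`-th root of unity. -/
def zetaP (p : ℕ) : ℂ := Complex.exp (2 * Real.pi * Complex.I / p)

/-- `ζ_p^c` for `c ∈ GF(p)`. -/
def eP (p : ℕ) (c : ZMod p) : ℂ := zetaP p ^ c.val

/-- The quadratic character `η̄` of `GF(p)` (with `η̄ 0 = 0`), valued in `ℂ`. -/
def chiP (p : ℕ) [Fact p.Prime] (c : ZMod p) : ℂ := ((quadraticChar (ZMod p) c : ℤ) : ℂ)

/-- The Gauss sum `√(p*) = ∑_{c ∈ GF(p)} η̄(c) ζ_p^c`, whose square is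
`p* = (-1)^((p-1)/2) * p`. -/
def GP (p : ℕ) [Fact p.Prime] : ℂ := ∑ c : ZMod p, chiP p c * eP p c

/-! ### Auxiliary lemmas -/

section Aux

lemma zetaP_prim (p : ℕ) [Fact p.Prime] : IsPrimitiveRoot (zetaP p) p :=
  Complex.isPrimitiveRoot_exp p (Nat.Prime.ne_zero Fact.out)

lemma zetaP_pow_p (p : ℕ) [Fact p.Prime] : zetaP p ^ p = 1 := (zetaP_prim p).pow_eq_one

lemma eP_natCast (p : ℕ) [Fact p.Prime] (n : ℕ) : eP p ((n : ZMod p)) = zetaP p ^ n := by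
  rw [eP, ZMod.val_natCast]
  conv_rhs => rw [← Nat.div_add_mod n p, pow_add, pow_mul, zetaP_pow_p, one_pow, one_mul]

lemma eP_add (p : ℕ) [Fact p.Prime] (a b : ZMod p) : eP p (a + b) = eP p a * eP p b := by
  have := eP_natCast p (a.val + b.val)
  rw [Nat.cast_add, ZMod.natCast_val, ZMod.natCast_val, ZMod.cast_id, ZMod.cast_id, pow_add] at this
  rw [this, ← eP_natCast p a.val, ← eP_natCast p b.val, ZMod.natCast_val, ZMod.natCast_val,
    ZMod.cast_id, ZMod.cast_id]

lemma eP_ne_one (p : ℕ) [Fact p.Prime] {c : ZMod p} (hc : c ≠ 0) : eP p c ≠ 1 := by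
  have h1 : 0 < c.val := by
    rcases Nat.eq_zero_or_pos c.val with h | h
    · exact absurd (by rwa [ZMod.val_eq_zero] at h) hc
    · exact h
  exact (zetaP_prim p).pow_ne_one_of_pos_of_lt h1.ne' (c.val_lt)

lemma zmod_pow_pow (p k : ℕ) [Fact p.Prime] (c : ZMod p) : c ^ p ^ k = c := by
  induction k with
  | zero => simp
  | succ k ih => rw [pow_succ, pow_mul, ih, ZMod.pow_card]

variable (p m : ℕ) [Fact p.Prime] [NeZero m]
    (F : Type) [Field F] [Fintype F] [Algebra (ZMod p) F]
    (hcard : Fintype.card F = p ^ m)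
    (f : F → ZMod p) (a : ZMod m → F)
    (hf : ∀ x, f x = ∑ i : ZMod m,
      Algebra.trace (ZMod p) F (a i * x ^ (p ^ (i.val) + 1)))

lemma trace_frob' (u : F) :
    Algebra.trace (ZMod p) F (u ^ p) = Algebra.trace (ZMod p) F u := by
  haveI : CharP F p := charP_of_injective_algebraMap (algebraMap (ZMod p) F).injective p
  let e : F ≃ₐ[ZMod p] F := AlgEquiv.ofBijective
    { toRingHom := frobenius F p,
      commutes' := fun c => by
        simp only [RingHom.toMonoidHom_eq_coe, OneHom.toFun_eq_coe, MonoidHom.toOneHom_coe,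
          MonoidHom.coe_coe, frobenius_def]
        rw [← map_pow, ZMod.pow_card] }
    (Finite.injective_iff_bijective.mp (frobenius F p).injective)
  have := Algebra.trace_eq_of_algEquiv e u
  simpa [e, AlgEquiv.ofBijective, frobenius_def] using this

lemma trace_frob_pow' (k : ℕ) (u : F) :
    Algebra.trace (ZMod p) F (u ^ p ^ k) = Algebra.trace (ZMod p) F u := by
  induction k with
  | zero => simp
  | succ k ih => rw [pow_succ, pow_mul, trace_frob', ih]

omit [Fact p.Prime] [Fintype F] [Algebra (ZMod p) F] in
lemma two_ne_zero'' (hp2 : p ≠ 2) [Fact p.Prime] [CharP F p] : (2 : F) ≠ 0 := by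
  have := CharP.cast_ne_zero_of_ne_of_prime F Nat.prime_two hp2
  exact_mod_cast this

lemma trace_two_mul (u v : F) :
    Algebra.trace (ZMod p) F ((2 : F) * u * v) = 2 * Algebra.trace (ZMod p) F (u * v) := by
  have h2 : (2:F) = algebraMap (ZMod p) F 2 := by rw [map_ofNat]
  rw [mul_assoc, h2, ← Algebra.smul_def, map_smul, smul_eq_mul]

include hcard hf in
lemma f_addd (hp2 : p ≠ 2) (L : F → F)
    (hL : ∀ x, L x = (2 : F)⁻¹ *
      ∑ i : ZMod m, (a i + a (-i) ^ (p ^ (i.val))) * x ^ (p ^ (i.val))) (x y : F) :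
    f (x + y) = f x + f y + 2 * Algebra.trace (ZMod p) F (L x * y) := by
  haveI : CharP F p := charP_of_injective_algebraMap (algebraMap (ZMod p) F).injective p
  have two_ne : (2 : F) ≠ 0 := two_ne_zero'' p F hp2
  set tr := Algebra.trace (ZMod p) F with htr
  have hpm : ∀ u : F, u ^ p ^ m = u := fun u => by
    rw [← hcard]; exact FiniteField.pow_card u
  have expand : ∀ i : ZMod m, a i * (x + y) ^ (p ^ i.val + 1)
      = a i * x ^ (p ^ i.val + 1) + a i * y ^ (p ^ i.val + 1)
        + a i * (x ^ p ^ i.val * y) + a i * (x * y ^ p ^ i.val) := by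
    intro i
    rw [pow_succ, add_pow_char_pow]
    ring
  have hsplit : f (x + y) = f x + f y
      + (∑ i : ZMod m, tr (a i * (x ^ p ^ i.val * y))
      + ∑ i : ZMod m, tr (a i * (x * y ^ p ^ i.val))) := by
    rw [hf, hf x, hf y, add_assoc, ← Finset.sum_add_distrib, ← Finset.sum_add_distrib,
      ← Finset.sum_add_distrib]
    refine Finset.sum_congr rfl fun i _ => ?_
    rw [expand i, map_add, map_add, map_add]
    ring
  have hswap : ∑ i : ZMod m, tr (a i * (x * y ^ p ^ i.val))
      = ∑ i : ZMod m, tr (a (-i) ^ p ^ i.val * (x ^ p ^ i.val * y)) := by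
    refine Fintype.sum_equiv (Equiv.neg (ZMod m)) _ _ (fun i => ?_)
    simp only [Equiv.neg_apply, neg_neg]
    rw [← trace_frob_pow' p F (-i).val (a i * (x * y ^ p ^ i.val))]
    congr 1
    rw [mul_pow, mul_pow, ← pow_mul, ← pow_add]
    by_cases hi : i = 0
    · subst hi; simp
    · have hsum : i.val + (-i).val = m := by
        rw [ZMod.neg_val, if_neg hi]
        have := ZMod.val_lt i
        have hv : i.val ≠ 0 := fun h => hi (by rwa [← ZMod.val_eq_zero])
        omega
      rw [hsum, hpm y]
  have h2L : (2 : F) * L x = ∑ i : ZMod m, (a i + a (-i) ^ (p ^ (i.val))) * x ^ (p ^ (i.val)) := by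
    rw [hL, mul_inv_cancel_left₀ two_ne]
  have hcomb : ∑ i : ZMod m, tr (a i * (x ^ p ^ i.val * y))
      + ∑ i : ZMod m, tr (a (-i) ^ p ^ i.val * (x ^ p ^ i.val * y))
      = tr ((2 : F) * L x * y) := by
    rw [h2L, Finset.sum_mul, map_sum, ← Finset.sum_add_distrib]
    refine Finset.sum_congr rfl fun i _ => ?_
    rw [← map_add]
    congr 1
    ring
  rw [hsplit, hswap, hcomb, trace_two_mul]

include hf in
lemma f_smull (c : ZMod p) (x : F) :
    f (algebraMap (ZMod p) F c * x) = c ^ 2 * f x := by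
  rw [hf, hf x, Finset.mul_sum]
  refine Finset.sum_congr rfl fun i _ => ?_
  have hc : c ^ (p ^ i.val + 1) = c ^ 2 := by
    rw [pow_add, pow_one, zmod_pow_pow, sq]
  have : a i * (algebraMap (ZMod p) F c * x) ^ (p ^ i.val + 1)
      = algebraMap (ZMod p) F (c ^ 2) * (a i * x ^ (p ^ i.val + 1)) := by
    rw [mul_pow, ← map_pow, hc]
    ring
  rw [this, ← Algebra.smul_def, map_smul, smul_eq_mul]

lemma L_addd (L : F → F)
    (hL : ∀ x, L x = (2 : F)⁻¹ *
      ∑ i : ZMod m, (a i + a (-i) ^ (p ^ (i.val))) * x ^ (p ^ (i.val))) (x y : F) :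
    L (x + y) = L x + L y := by
  haveI : CharP F p := charP_of_injective_algebraMap (algebraMap (ZMod p) F).injective p
  rw [hL, hL x, hL y, ← mul_add, ← Finset.sum_add_distrib]
  congr 1
  refine Finset.sum_congr rfl fun i _ => ?_
  rw [add_pow_char_pow]
  ring

lemma L_smull (L : F → F)
    (hL : ∀ x, L x = (2 : F)⁻¹ *
      ∑ i : ZMod m, (a i + a (-i) ^ (p ^ (i.val))) * x ^ (p ^ (i.val)))
    (c : ZMod p) (x : F) :
    L (algebraMap (ZMod p) F c * x) = algebraMap (ZMod p) F c * L x := by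
  rw [hL, hL x]
  have : ∀ i : ZMod m, (a i + a (-i) ^ p ^ i.val) * (algebraMap (ZMod p) F c * x) ^ p ^ i.val
      = algebraMap (ZMod p) F c * ((a i + a (-i) ^ p ^ i.val) * x ^ p ^ i.val) := by
    intro i
    rw [mul_pow, ← map_pow, zmod_pow_pow]
    ring
  simp_rw [this]
  rw [← Finset.mul_sum]
  ring

end Aux

theorem stmt7
    (p m : ℕ) [Fact p.Prime] (hp2 : p ≠ 2) [NeZero m]
    (F : Type) [Field F] [Fintype F] [DecidableEq F] [Algebra (ZMod p) F]
    (hcard : Fintype.card F = p ^ m)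
    -- `f` is a homogeneous quadratic function with coefficients `a`
    (f : F → ZMod p) (a : ZMod m → F)
    (hf : ∀ x, f x = ∑ i : ZMod m,
      Algebra.trace (ZMod p) F (a i * x ^ (p ^ (i.val) + 1)))
    -- `L` is the associated linear map `L_f`
    (L : F → F)
    (hL : ∀ x, L x = (2 : F)⁻¹ *
      ∑ i : ZMod m, (a i + a (-i) ^ (p ^ (i.val))) * x ^ (p ^ (i.val)))
    -- `r` is the rank of `f` (so that `#Ker L_f = p^(m-r)`)
    (r : ℕ) (hrm : r ≤ m)
    (hker : {x : F | L x = 0}.ncard = p ^ (m - r))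
    -- `ε` is the sign of `f`
    (ε : ℂ) (hε : ε = 1 ∨ ε = -1)
    (hsign : ∑ x : F, eP p (f x) = ε * (p : ℂ) ^ m * GP p ^ (-(r : ℤ)))
    (α : F) (hα : α ∉ Set.range L)
    (β : F) (hβ : β ≠ 0) :
    (∀ z₀ : ZMod p, z₀ ≠ 0 → β - algebraMap (ZMod p) F z₀⁻¹ * α ∈ Set.range L →
      ∀ x' : F, L x' = -((α - algebraMap (ZMod p) F z₀ * β) / 2) →
        ∑ z : ZMod p, ∑ x : F, eP p (f x - Algebra.trace (ZMod p) F ((α - algebraMap (ZMod p) F z * β) * x))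
          = ε * (p : ℂ) ^ m * GP p ^ (-(r : ℤ)) * eP p (-(f x'))) ∧
    ((¬ ∃ z : ZMod p, z ≠ 0 ∧ β - algebraMap (ZMod p) F z * α ∈ Set.range L) →
      ∑ z : ZMod p, ∑ x : F, eP p (f x - Algebra.trace (ZMod p) F ((α - algebraMap (ZMod p) F z * β) * x)) = 0) := by
  haveI : CharP F p := charP_of_injective_algebraMap (algebraMap (ZMod p) F).injective p
  haveI : FiniteDimensional (ZMod p) F := Module.Finite.of_finite
  have two_ne : (2 : F) ≠ 0 := two_ne_zero'' p F hp2
  have htwoZ : (2 : ZMod p) ≠ 0 := two_ne_zero'' p (ZMod p) hp2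
  set tr := Algebra.trace (ZMod p) F with htr
  set φ := algebraMap (ZMod p) F with hφ
  have fadd : ∀ x y, f (x + y) = f x + f y + 2 * tr (L x * y) :=
    f_addd p m F hcard f a hf hp2 L hL
  have fsmul : ∀ (c : ZMod p) x, f (φ c * x) = c ^ 2 * f x := f_smull p m F f a hf
  have Ladd : ∀ x y, L (x + y) = L x + L y := L_addd p m F a L hL
  have Lsmul : ∀ (c : ZMod p) x, L (φ c * x) = φ c * L x := L_smull p m F a L hL
  have Lneg : ∀ x, L (-x) = - L x := by
    intro x
    have h := Lsmul (-1) x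
    rwa [map_neg, map_one, neg_one_mul, neg_one_mul] at h
  have hfLxx : ∀ x : F, tr (L x * x) = f x := by
    intro x
    have h1 := fadd x x
    have h2 : f (x + x) = 4 * f x := by
      have hx2 : x + x = φ 2 * x := by rw [hφ, map_ofNat]; ring
      rw [hx2, fsmul]
      norm_num
    apply mul_left_cancel₀ htwoZ
    linear_combination h2 - h1
  have hsym : ∀ x y, tr (L x * y) = tr (x * L y) := by
    intro x y
    have h1 := fadd x y
    have h2 := fadd y x
    rw [add_comm y x] at h2
    have h3 : 2 * tr (L x * y) = 2 * tr (L y * x) := by linear_combination h2 - h1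
    have h4 := mul_left_cancel₀ htwoZ h3
    rw [h4, mul_comm]
  have fneg : ∀ x, f (-x) = f x := by
    intro x
    have h := fsmul (-1) x
    rwa [map_neg, map_one, neg_one_mul, neg_one_sq, one_mul] at h
  -- the associated linear map as a `LinearMap`
  let L' : F →ₗ[ZMod p] F :=
    { toFun := L
      map_add' := Ladd
      map_smul' := fun c x => by
        simp only [RingHom.id_apply]
        rw [Algebra.smul_def, Algebra.smul_def, Lsmul] }
  have hL' : ∀ x, L' x = L x := fun _ => rfl
  have hmemRR : ∀ v : F, v ∈ Set.range L ↔ v ∈ LinearMap.range L' := by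
    intro v
    constructor
    · rintro ⟨x, hx⟩; exact ⟨x, hx⟩
    · rintro ⟨x, hx⟩; exact ⟨x, hx⟩
  -- orthogonality theory for the trace form
  set B := Algebra.traceForm (ZMod p) F with hB
  have hnd : B.Nondegenerate := traceForm_nondegenerate _ _
  have hrefl : B.IsRefl := (Algebra.traceForm_isSymm (ZMod p) (S := F)).isRefl
  have hBapp : ∀ u v : F, B u v = tr (u * v) := fun u v => rfl
  have hkerorth : LinearMap.ker L' = B.orthogonal (LinearMap.range L') := by
    ext y
    simp only [LinearMap.mem_ker, LinearMap.BilinForm.mem_orthogonal_iff]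
    constructor
    · rintro hy n ⟨x, rfl⟩
      show B (L' x) y = 0
      rw [hBapp, hL', hsym x y, show L y = 0 from hy, mul_zero, map_zero]
    · intro h
      apply hnd.1
      intro z
      have h1 : B (L' z) y = 0 := h (L' z) ⟨z, rfl⟩
      rw [hBapp] at h1 ⊢
      rw [hL'] at h1 ⊢
      rw [hsym y z, mul_comm y (L z)]
      exact h1
  have hrange_orth : B.orthogonal (LinearMap.ker L') = LinearMap.range L' := by
    rw [hkerorth]
    exact LinearMap.BilinForm.orthogonal_orthogonal hnd hrefl _
  have hperp : ∀ γ : F, γ ∉ Set.range L → ∃ y, L y = 0 ∧ tr (γ * y) ≠ 0 := by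
    intro γ hγ
    by_contra hcon
    push_neg at hcon
    apply hγ
    have hmem : γ ∈ B.orthogonal (LinearMap.ker L') := by
      rw [LinearMap.BilinForm.mem_orthogonal_iff]
      intro n hn
      show B n γ = 0
      rw [hBapp, mul_comm]
      exact hcon n hn
    rw [hrange_orth] at hmem
    exact (hmemRR γ).mpr hmem
  -- the inner character sum
  set S : F → ℂ := fun γ => ∑ x : F, eP p (f x - tr (γ * x)) with hS
  have hshift : ∀ (γ w : F), S γ = ∑ x : F, eP p (f (x + w) - tr (γ * (x + w))) :=
    fun γ w => (Fintype.sum_equiv (Equiv.addRight w)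
      (fun x => eP p (f (x + w) - tr (γ * (x + w))))
      (fun x => eP p (f x - tr (γ * x))) (fun x => rfl)).symm
  have hS_zero : ∀ γ : F, γ ∉ Set.range L → S γ = 0 := by
    intro γ hγ
    obtain ⟨y, hy, hty⟩ := hperp γ hγ
    have key : S γ = eP p (-(tr (γ * y))) * S γ := by
      calc S γ = ∑ x : F, eP p (f (x + y) - tr (γ * (x + y))) := hshift γ y
        _ = ∑ x : F, eP p (-(tr (γ * y))) * eP p (f x - tr (γ * x)) := by
            refine Finset.sum_congr rfl fun x _ => ?_
            have h1 : f (x + y) = f x := by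
              rw [fadd x y, hsym x y, hy, mul_zero, map_zero, mul_zero, add_zero, ← hfLxx y,
                hy, zero_mul, map_zero, add_zero]
            have h2 : f (x + y) - tr (γ * (x + y))
                = (-(tr (γ * y))) + (f x - tr (γ * x)) := by
              rw [h1, mul_add, map_add]
              ring
            rw [h2, eP_add]
        _ = eP p (-(tr (γ * y))) * S γ := by rw [← Finset.mul_sum]
    have hne : eP p (-(tr (γ * y))) ≠ 1 := eP_ne_one p (neg_ne_zero.mpr hty)
    have hz : (1 - eP p (-(tr (γ * y)))) * S γ = 0 := by
      rw [sub_mul, one_mul, ← key, sub_self]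
    rcases mul_eq_zero.mp hz with h | h
    · exact absurd (by linear_combination -h) hne
    · exact h
  have hS_val : ∀ (γ x' : F), L x' = -(γ / 2) →
      S γ = (∑ x : F, eP p (f x)) * eP p (-(f x')) := by
    intro γ x' hx'
    set w := -x' with hw
    have hLw : (2 : F) * L w = γ := by
      rw [hw, Lneg, hx', neg_neg]
      field_simp
    have hfw : f w = f x' := fneg x'
    have key : ∀ x : F, f (x + w) - tr (γ * (x + w)) = (-(f x')) + f x := by
      intro x
      have e1 : tr (γ * x) = 2 * tr (L w * x) := by
        rw [← hLw, trace_two_mul]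
      have e2 : tr (γ * w) = 2 * f w := by
        rw [← hLw, trace_two_mul, hfLxx]
      rw [fadd x w, mul_add, map_add, e1, e2, hsym x w, mul_comm x (L w), hfw]
      ring
    calc S γ = ∑ x : F, eP p (f (x + w) - tr (γ * (x + w))) := hshift γ w
      _ = ∑ x : F, eP p (-(f x')) * eP p (f x) := by
          refine Finset.sum_congr rfl fun x _ => ?_
          rw [key x, eP_add]
      _ = (∑ x : F, eP p (f x)) * eP p (-(f x')) := by
          rw [← Finset.mul_sum, mul_comm]
  -- the double sum is `∑ z, S (α - φ z * β)`
  have hdouble : ∑ z : ZMod p, ∑ x : F, eP p (f x - tr ((α - φ z * β) * x))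
      = ∑ z : ZMod p, S (α - φ z * β) := rfl
  -- range membership manipulation
  have hsmul_mem : ∀ (c : ZMod p) (v : F), v ∈ Set.range L → φ c * v ∈ Set.range L := by
    rintro c v ⟨x, rfl⟩
    exact ⟨φ c * x, Lsmul c x⟩
  have hsub_mem : ∀ v u : F, v ∈ Set.range L → u ∈ Set.range L → v - u ∈ Set.range L := by
    intro v u hv hu
    rw [hmemRR] at hv hu ⊢
    exact sub_mem hv hu
  have hmove : ∀ z : ZMod p, z ≠ 0 → (α - φ z * β) ∈ Set.range L →
      β - φ z⁻¹ * α ∈ Set.range L := by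
    rintro z hz ⟨u, hu⟩
    have hzz : φ z⁻¹ * φ z = 1 := by
      rw [← map_mul, inv_mul_cancel₀ hz, map_one]
    have : β - φ z⁻¹ * α = φ z⁻¹ * (-(α - φ z * β)) := by
      calc β - φ z⁻¹ * α = (φ z⁻¹ * φ z) * β - φ z⁻¹ * α := by rw [hzz]; ring
        _ = φ z⁻¹ * (-(α - φ z * β)) := by ring
    rw [this, ← hu, ← Lneg, ← Lsmul]
    exact ⟨_, rfl⟩
  refine ⟨?_, ?_⟩
  · -- Case 1
    intro z₀ hz₀ hmem x' hx'
    have hNotMem : ∀ z : ZMod p, z ≠ z₀ → (α - φ z * β) ∉ Set.range L := by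
      intro z hzne hin
      by_cases hz : z = 0
      · subst hz
        apply hα
        simpa using hin
      · have h1 := hmove z hz hin
        have h2 : (β - φ z₀⁻¹ * α) - (β - φ z⁻¹ * α) = φ (z⁻¹ - z₀⁻¹) * α := by
          rw [map_sub]
          ring
        have h3 : φ (z⁻¹ - z₀⁻¹) * α ∈ Set.range L := by
          rw [← h2]
          exact hsub_mem _ _ hmem h1
        have hc : z⁻¹ - z₀⁻¹ ≠ 0 := by
          refine sub_ne_zero.mpr fun h => hzne ?_
          exact inv_injective h
        apply hα
        have h4 := hsmul_mem (z⁻¹ - z₀⁻¹)⁻¹ _ h3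
        rw [← mul_assoc, ← map_mul, inv_mul_cancel₀ hc, map_one, one_mul] at h4
        exact h4
    rw [hdouble, Finset.sum_eq_single z₀
      (fun z _ hzne => hS_zero _ (hNotMem z hzne))
      (fun h => absurd (Finset.mem_univ z₀) h)]
    rw [hS_val (α - φ z₀ * β) x' hx', hsign]
  · -- Case 2
    intro hno
    rw [hdouble]
    refine Finset.sum_eq_zero fun z _ => hS_zero _ ?_
    intro hin
    by_cases hz : z = 0
    · subst hz
      apply hα
      simpa using hin
    · exact hno ⟨z⁻¹, inv_ne_zero hz, hmove z hz hin⟩
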